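/- arXiv:math/0012182 — 2 statements merged into one kernel-verified Lean document; each statement's English description precedes it below -/
import Mathlib

section
/- Define a_{j,j}^k = (k+j-1)!·(p-k)! / ((k-1)!·(p-k-j)!) for integers 1 ≤ k ≤ p-j and 0 ≤ j, with a_{j,j}^l := 0 when l < 1 or l > p-j, and for m ≤ 0 define a_{j,m}^k = Σ_{i=0}^{j-m} (-1)^{i+j+m} C(j-m,i) a_{j,j}^{k-i-m}. Then a_{j,-j}^k = (-1)^j (2j)! for all valid k, i.e. it is independent of k. -/
/-- `a_{j,j}^l = (l+j-1)!·(p-l)! / ((l-1)!·(p-l-j)!)` for `1 ≤ l ≤ p-j`,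
extended by zero outside this range. -/
noncomputable def ajj (p j : ℕ) (l : ℤ) : ℚ :=
  if 1 ≤ l ∧ l ≤ (p : ℤ) - j then
    ((Nat.factorial (l.toNat + j - 1) : ℚ) * (Nat.factorial (p - l.toNat) : ℚ)) /
      ((Nat.factorial (l.toNat - 1) : ℚ) * (Nat.factorial (p - l.toNat - j) : ℚ))
  else 0

open Finset Polynomial

/-- forward difference of an eval of a polynomial of degree ≤ n, iterated n times,
is n! times the top coefficient. -/
lemma fd_poly : ∀ (n : ℕ) (P : ℚ[X]), P.natDegree ≤ n → ∀ x : ℚ,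
    (fwdDiff (1:ℚ))^[n] (fun y => P.eval y) x = n.factorial * P.coeff n := by
  intro n
  induction n with
  | zero =>
    intro P hP x
    rw [Polynomial.eq_C_of_natDegree_le_zero hP]
    simp
  | succ n ih =>
    intro P hP x
    set Q : ℚ[X] := Polynomial.taylor 1 P - P with hQdef
    have hev : ∀ m, Q.coeff m = (Polynomial.hasseDeriv m P).eval 1 - P.coeff m := by
      intro m; simp [hQdef, Polynomial.taylor_coeff]
    have hhigh : ∀ m, n < m → Q.coeff m = 0 := by
      intro m hm
      have h1 : (Polynomial.hasseDeriv m P).natDegree ≤ 0 := by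
        have := Polynomial.natDegree_hasseDeriv_le P m
        omega
      rw [hev, Polynomial.eq_C_of_natDegree_le_zero h1]
      simp [Polynomial.hasseDeriv_coeff]
    have hQdeg : Q.natDegree ≤ n := Polynomial.natDegree_le_iff_coeff_eq_zero.mpr hhigh
    have hcoef : Q.coeff n = ((n:ℚ)+1) * P.coeff (n+1) := by
      rw [hev]
      have h1 : (Polynomial.hasseDeriv n P).natDegree < 2 := by
        have := Polynomial.natDegree_hasseDeriv_le P n
        omega
      rw [Polynomial.eval_eq_sum_range' h1]
      simp only [Finset.sum_range_succ, Finset.sum_range_one, Polynomial.hasseDeriv_coeff,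
        Nat.choose_self, pow_zero, pow_one, mul_one, one_mul, Nat.cast_one, zero_add]
      rw [show 1 + n = n + 1 from add_comm 1 n, Nat.choose_succ_self_right]
      push_cast
      ring
    have hdiff : fwdDiff (1:ℚ) (fun y => P.eval y) = fun y => Q.eval y := by
      funext y
      simp [fwdDiff, hQdef, Polynomial.taylor_eval]
    rw [Function.iterate_succ_apply, hdiff, ih Q hQdeg, hcoef, Nat.factorial_succ]
    push_cast
    ring

lemma ascFactorial_eq_prod_range (n : ℕ) : ∀ k, n.ascFactorial k = ∏ i ∈ Finset.range k, (n + i)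
  | 0 => rfl
  | k + 1 => by
    rw [Nat.ascFactorial_succ, Finset.prod_range_succ, mul_comm,
      ascFactorial_eq_prod_range n k]

/-- The polynomial `∏_{t<j} (X + t) * ∏_{t<j} (X + t - p)`. -/
noncomputable def Gp (p j : ℕ) : ℚ[X] :=
  (∏ t ∈ Finset.range j, (X + C (t:ℚ))) * ∏ t ∈ Finset.range j, (X + C ((t:ℚ) - p))

lemma Gp_monic (p j : ℕ) : (Gp p j).Monic := by
  apply Polynomial.Monic.mul <;>
    exact Polynomial.monic_prod_of_monic _ _ (fun i _ => Polynomial.monic_X_add_C _)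

lemma Gp_natDegree (p j : ℕ) : (Gp p j).natDegree = 2 * j := by
  rw [Gp, Polynomial.Monic.natDegree_mul
    (Polynomial.monic_prod_of_monic _ _ (fun i _ => Polynomial.monic_X_add_C _))
    (Polynomial.monic_prod_of_monic _ _ (fun i _ => Polynomial.monic_X_add_C _)),
    Polynomial.natDegree_prod_of_monic _ _ (fun i _ => Polynomial.monic_X_add_C _),
    Polynomial.natDegree_prod_of_monic _ _ (fun i _ => Polynomial.monic_X_add_C _)]
  simp only [Polynomial.natDegree_X_add_C, Finset.sum_const, Finset.card_range, smul_eq_mul,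
    mul_one]
  ring

lemma Gp_eval (p j : ℕ) (y : ℚ) :
    (Gp p j).eval y = (∏ t ∈ Finset.range j, (y + t)) * ∏ t ∈ Finset.range j, (y + t - p) := by
  simp only [Gp, Polynomial.eval_mul, Polynomial.eval_prod, Polynomial.eval_add,
    Polynomial.eval_X, Polynomial.eval_C, Polynomial.eval_sub]
  congr 1
  exact Finset.prod_congr rfl fun t _ => by ring

/-- The key evaluation: in the whole relevant window, `ajj` agrees with `(-1)^j * Gp`. -/
lemma ajj_eq_eval (p j : ℕ) (hj : j ≤ p) (l : ℤ) (h1 : 1 - (j:ℤ) ≤ l) (h2 : l ≤ (p:ℤ)) :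
    ajj p j l = (-1:ℚ)^j * (Gp p j).eval (l:ℚ) := by
  rcases le_or_gt l 0 with h0 | h0
  · -- low zero case
    have hterm : ((l:ℚ) + ((-l).toNat : ℕ)) = 0 := by
      have h' : (((-l).toNat : ℤ)) = -l := Int.toNat_of_nonneg (by omega)
      have h'' : (((-l).toNat : ℕ) : ℚ) = -(l:ℚ) := by exact_mod_cast congrArg ((Int.cast : ℤ → ℚ)) h'
      rw [h'']
      ring
    have hmem : (-l).toNat ∈ Finset.range j := by
      rw [Finset.mem_range]; omega
    rw [ajj, if_neg (by omega), Gp_eval, Finset.prod_eq_zero hmem hterm]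
    ring
  · rcases le_or_gt l ((p:ℤ) - j) with hr | hr
    · -- main case: 1 ≤ l ≤ p - j
      obtain ⟨m, rfl⟩ : ∃ m : ℕ, l = (m:ℤ) := ⟨l.toNat, (Int.toNat_of_nonneg (by omega)).symm⟩
      have hm1 : 1 ≤ m := by exact_mod_cast h0
      have hmj : m + j ≤ p := by omega
      rw [ajj, if_pos ⟨by exact_mod_cast h0, hr⟩]
      simp only [Int.toNat_natCast]
      have e1 : (m + j - 1).factorial = (m-1).factorial * m.ascFactorial j := by
        have h := Nat.factorial_mul_ascFactorial (m-1) j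
        rw [Nat.sub_add_cancel hm1] at h
        rw [show m + j - 1 = m - 1 + j by omega, ← h]
      have e2 : (p - m).factorial = (p - m - j).factorial * (p - m).descFactorial j :=
        (Nat.factorial_mul_descFactorial (by omega)).symm
      rw [e1, e2]
      have hne1 : ((m-1).factorial : ℚ) ≠ 0 := Nat.cast_ne_zero.mpr (Nat.factorial_ne_zero _)
      have hne2 : ((p - m - j).factorial : ℚ) ≠ 0 := Nat.cast_ne_zero.mpr (Nat.factorial_ne_zero _)
      have hval : ((m.ascFactorial j : ℚ)) * ((p - m).descFactorial j : ℚ)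
          = (-1:ℚ)^j * (Gp p j).eval (m:ℚ) := by
        rw [Gp_eval, ascFactorial_eq_prod_range, Nat.descFactorial_eq_prod_range]
        push_cast
        have hd : (∏ i ∈ Finset.range j, ((p - m - i : ℕ) : ℚ))
            = ∏ i ∈ Finset.range j, ((p:ℚ) - m - i) := by
          apply Finset.prod_congr rfl
          intro i hi
          have hij : i < j := Finset.mem_range.mp hi
          have : ((p - m - i : ℕ) : ℚ) = ((p:ℚ) - m - i) := by
            have h' : i + m ≤ p := by omega
            push_cast [Nat.cast_sub (by omega : i ≤ p - m), Nat.cast_sub (by omega : m ≤ p)]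
            ring
          rw [this]
        rw [hd]
        have he : (∏ t ∈ Finset.range j, ((m:ℚ) + t - p))
            = (-1:ℚ)^j * ∏ t ∈ Finset.range j, ((p:ℚ) - m - t) := by
          rw [show ((-1:ℚ)^j) = ∏ _t ∈ Finset.range j, (-1:ℚ) by
            rw [Finset.prod_const, Finset.card_range], ← Finset.prod_mul_distrib]
          apply Finset.prod_congr rfl
          intro t _
          ring
        rw [he]
        have hsq : (-1:ℚ)^j * (-1:ℚ)^j = 1 := by
          rw [← pow_add]
          exact Even.neg_one_pow ⟨j, rfl⟩
        linear_combination (-((∏ x ∈ Finset.range j, ((m:ℚ) + x)) *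
          ∏ i ∈ Finset.range j, ((p:ℚ) - m - i))) * hsq
      push_cast
      push_cast at hval
      field_simp
      rw [← hval]
    · -- high zero case
      have hterm : ((l:ℚ) + (((p:ℤ) - l).toNat : ℕ) - p) = 0 := by
        have h' : ((((p:ℤ) - l).toNat : ℤ)) = (p:ℤ) - l := Int.toNat_of_nonneg (by omega)
        have h'' : ((((p:ℤ) - l).toNat : ℕ) : ℚ) = (p:ℚ) - l := by
          exact_mod_cast congrArg ((Int.cast : ℤ → ℚ)) h'
        rw [h'']
        ring
      have hmem : ((p:ℤ) - l).toNat ∈ Finset.range j := by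
        rw [Finset.mem_range]; omega
      have hz : (∏ t ∈ Finset.range j, ((l:ℚ) + t - p)) = 0 :=
        Finset.prod_eq_zero hmem hterm
      rw [ajj, if_neg (by omega), Gp_eval, hz]
      ring

/-- `a_{j,-j}^k = Σ_{i=0}^{2j} (-1)^i C(2j,i) a_{j,j}^{k-i+j} = (-1)^j (2j)!`
for all `1 ≤ k ≤ p-j`; in particular it is independent of `k`. -/
theorem stmt1 (p j k : ℕ) (hp : 1 ≤ p) (hj : j < p) (hk1 : 1 ≤ k) (hk2 : k ≤ p - j) :
    ∑ i ∈ Finset.range (2 * j + 1),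
        (-1 : ℚ) ^ i * (Nat.choose (2 * j) i : ℚ) * ajj p j ((k : ℤ) - i + j)
      = (-1 : ℚ) ^ j * (Nat.factorial (2 * j) : ℚ) := by
  have hj' : j ≤ p := hj.le
  have hk2' : (k:ℤ) ≤ (p:ℤ) - j := by omega
  set P : ℚ[X] := C ((-1:ℚ)^j) * Gp p j with hPdef
  have hf : ∀ i : ℕ, i ≤ 2 * j → ajj p j ((k:ℤ) - j + i) = P.eval (((k:ℚ) - j) + i) := by
    intro i hi
    have := ajj_eq_eval p j hj' ((k:ℤ) - j + i) (by omega) (by omega)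
    rw [this, hPdef]
    simp only [Polynomial.eval_mul, Polynomial.eval_C]
    congr 1
    push_cast
    ring
  have hPdeg : P.natDegree ≤ 2 * j := by
    refine le_trans (Polynomial.natDegree_mul_le) ?_
    rw [Polynomial.natDegree_C, Gp_natDegree]
    omega
  have hPcoeff : P.coeff (2 * j) = (-1:ℚ)^j := by
    rw [hPdef, Polynomial.coeff_C_mul]
    have := (Gp_monic p j).coeff_natDegree
    rw [Gp_natDegree] at this
    rw [this, mul_one]
  -- reflect the sum
  have hreflect : ∑ i ∈ Finset.range (2 * j + 1),
        (-1 : ℚ) ^ i * (Nat.choose (2 * j) i : ℚ) * ajj p j ((k : ℤ) - i + j)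
      = ∑ i ∈ Finset.range (2 * j + 1),
        ((-1 : ℤ) ^ (2 * j - i) * (Nat.choose (2 * j) i : ℤ)) •
          P.eval (((k:ℚ) - j) + i • (1:ℚ)) := by
    rw [← Finset.sum_range_reflect
      (fun i => (-1 : ℚ) ^ i * (Nat.choose (2 * j) i : ℚ) * ajj p j ((k : ℤ) - i + j))]
    apply Finset.sum_congr rfl
    intro i hi
    have hi' : i ≤ 2 * j := by
      have := Finset.mem_range.mp hi; omega
    have harg : (k:ℤ) - ((2 * j + 1 - 1 - i : ℕ) : ℤ) + j = (k:ℤ) - j + i := by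
      have : (2 * j + 1 - 1 - i : ℕ) = 2 * j - i := by omega
      rw [this]
      push_cast [Nat.cast_sub hi']
      ring
    rw [harg, hf i hi']
    rw [show (2 * j + 1 - 1 - i : ℕ) = 2 * j - i by omega]
    rw [Nat.choose_symm hi']
    simp only [zsmul_eq_mul, nsmul_eq_mul, mul_one]
    push_cast
    ring
  rw [hreflect, ← fwdDiff_iter_eq_sum_shift (1:ℚ) (fun y => P.eval y) (2*j) ((k:ℚ) - j),
    fd_poly (2*j) P hPdeg, hPcoeff]
  ring
end

section
/- In the classical (Poisson) setting, suppose S(u) is a matrix of commuting generating series satisfying the reflection-type Poisson bracket {S₁(u), S₂(v)} = [r₁₂(u-v), S₁(u)S₂(v)] + S₂(v) r'₁₂(u+v) S₁(u) - S₁(u) r'₁₂(u+v) S₂(v), and let S̄(u) := τ(S(u)) where τ is the anti-involution with τ(r₁₂) = r'₁₂. Then S'(u) := ½(S(u) + S̄(u)) satisfies the same Poisson bracket relation, and moreover S'(u) - S'(-u) = S(u) - S(-u) whenever τ[S(u)] = S(u) + θ₀ (S(u)-S(-u))/(2u). -/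
open Matrix

variable (N : ℕ) (A : Type*) [CommRing A] [Algebra ℚ A]

/-- `X₁ = X ⊗ I` in the tensor square of the auxiliary space. -/
def M1 (X : Matrix (Fin N) (Fin N) A) :
    Matrix (Fin N × Fin N) (Fin N × Fin N) A :=
  Matrix.of fun a b => if a.2 = b.2 then X a.1 b.1 else 0

/-- `X₂ = I ⊗ X` in the tensor square of the auxiliary space. -/
def M2 (X : Matrix (Fin N) (Fin N) A) :
    Matrix (Fin N × Fin N) (Fin N × Fin N) A :=
  Matrix.of fun a b => if a.1 = b.1 then X a.2 b.2 else 0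

/-- The permutation operator `P = Σ E_{ij} ⊗ E_{ji}` with entries in `A`. -/
def PA : Matrix (Fin N × Fin N) (Fin N × Fin N) A :=
  Matrix.of fun a b => if a.1 = b.2 ∧ a.2 = b.1 then 1 else 0

/-- `Q = Σ θ^i θ^j E_{ij} ⊗ E_{N+1-i,N+1-j}` with entries in `A`. -/
def QA (θ : Fin N → ℚ) : Matrix (Fin N × Fin N) (Fin N × Fin N) A :=
  Matrix.of fun a b =>
    if a.2 = a.1.rev ∧ b.2 = b.1.rev then (θ a.1 * θ b.1) • (1 : A) else 0

/-- The twisted transposition, entrywise on matrices over `A`. -/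
def tmat (θ : Fin N → ℚ) (X : Matrix (Fin N) (Fin N) A) :
    Matrix (Fin N) (Fin N) A :=
  Matrix.of fun i j => (θ i.rev * θ j.rev) • X j.rev i.rev

/-- The matrix of Poisson brackets `{X₁, Y₂}`, with entries
`{X₁,Y₂}_{(i,j),(k,l)} = {X_{ik}, Y_{jl}}`. -/
def PBmat (pb : A → A → A) (X Y : Matrix (Fin N) (Fin N) A) :
    Matrix (Fin N × Fin N) (Fin N × Fin N) A :=
  Matrix.of fun a b => pb (X a.1 b.1) (Y a.2 b.2)

/-- The reflection-type Poisson bracket relation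
`{S₁(u),S₂(v)} = [r₁₂(u-v), S₁(u)S₂(v)] + S₂(v) r'₁₂(u+v) S₁(u)
 - S₁(u) r'₁₂(u+v) S₂(v)` with `r(x) = x⁻¹P`, `r'(x) = x⁻¹Q`, written
coefficientwise after multiplying by `(u²-v²)`. -/
def RefRel (θ : Fin N → ℚ) (pb : A → A → A) (S : ℕ → Matrix (Fin N) (Fin N) A) : Prop :=
  ∀ m n : ℕ,
    PBmat N A pb (S (m + 2)) (S n) - PBmat N A pb (S m) (S (n + 2))
    = (PA N A * (M1 N A (S (m + 1)) * M2 N A (S n))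
        - (M1 N A (S (m + 1)) * M2 N A (S n)) * PA N A)
      + (PA N A * (M1 N A (S m) * M2 N A (S (n + 1)))
        - (M1 N A (S m) * M2 N A (S (n + 1))) * PA N A)
      + ((M2 N A (S n) * QA N A θ * M1 N A (S (m + 1))
          - M1 N A (S (m + 1)) * QA N A θ * M2 N A (S n))
        - (M2 N A (S (n + 1)) * QA N A θ * M1 N A (S m)
          - M1 N A (S m) * QA N A θ * M2 N A (S (n + 1))))

set_option linter.unusedSectionVars false

/-! ### Auxiliary machinery -/

/-- Partial twisted transposition in the first tensor factor. -/
def T1x (θ : Fin N → ℚ) (Z : Matrix (Fin N × Fin N) (Fin N × Fin N) A) :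
    Matrix (Fin N × Fin N) (Fin N × Fin N) A :=
  Matrix.of fun a b => (θ a.1.rev * θ b.1.rev) • Z (b.1.rev, a.2) (a.1.rev, b.2)

/-- Partial twisted transposition in the second tensor factor. -/
def T2x (θ : Fin N → ℚ) (Z : Matrix (Fin N × Fin N) (Fin N × Fin N) A) :
    Matrix (Fin N × Fin N) (Fin N × Fin N) A :=
  Matrix.of fun a b => (θ a.2.rev * θ b.2.rev) • Z (a.1, b.2.rev) (b.1, a.2.rev)

def Hmat (θ : Fin N → ℚ) (X Y : Matrix (Fin N) (Fin N) A) :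
    Matrix (Fin N × Fin N) (Fin N × Fin N) A :=
  PA N A * (M1 N A X * M2 N A Y) - (M1 N A X * M2 N A Y) * PA N A
    + (M2 N A Y * QA N A θ * M1 N A X - M1 N A X * QA N A θ * M2 N A Y)

def Kmat (θ : Fin N → ℚ) (X Y : Matrix (Fin N) (Fin N) A) :
    Matrix (Fin N × Fin N) (Fin N × Fin N) A :=
  PA N A * (M1 N A X * M2 N A Y) - (M1 N A X * M2 N A Y) * PA N A
    - (M2 N A Y * QA N A θ * M1 N A X - M1 N A X * QA N A θ * M2 N A Y)

lemma sum_rev (f : Fin N → A) : (∑ x : Fin N, f x.rev) = ∑ x : Fin N, f x :=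
  Fintype.sum_equiv Fin.revPerm _ _ (fun _ => rfl)

lemma sum_ite_rev₁ (f : Fin N → A) (c : Fin N) :
    (∑ x, if x.rev = c then f x else 0) = f c.rev := by
  rw [← sum_rev N A (fun x => if x.rev = c then f x else 0)]
  simp

lemma sum_ite_rev₂ (f : Fin N → A) (c : Fin N) :
    (∑ x, if c = x.rev then f x else 0) = f c.rev := by
  rw [← sum_rev N A (fun x => if c = x.rev then f x else 0)]
  simp [eq_comm]

lemma M1M2_apply (X Y : Matrix (Fin N) (Fin N) A) (a b : Fin N × Fin N) :
    (M1 N A X * M2 N A Y) a b = X a.1 b.1 * Y a.2 b.2 := by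
  simp [Matrix.mul_apply, M1, M2, Fintype.sum_prod_type, ite_and]

lemma PA_mul_apply (Z : Matrix (Fin N × Fin N) (Fin N × Fin N) A) (a b : Fin N × Fin N) :
    (PA N A * Z) a b = Z (a.2, a.1) b := by
  simp [Matrix.mul_apply, PA, Fintype.sum_prod_type, ite_and]

lemma mul_PA_apply (Z : Matrix (Fin N × Fin N) (Fin N × Fin N) A) (a b : Fin N × Fin N) :
    (Z * PA N A) a b = Z a (b.2, b.1) := by
  simp [Matrix.mul_apply, PA, Fintype.sum_prod_type, ite_and]

lemma M2QA_M1_apply (θ : Fin N → ℚ) (X Y : Matrix (Fin N) (Fin N) A) (a b : Fin N × Fin N) :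
    (M2 N A Y * QA N A θ * M1 N A X) a b
      = (θ a.1 * θ b.2.rev) • (Y a.2 a.1.rev * X b.2.rev b.1) := by
  simp [Matrix.mul_apply, M1, M2, QA, Fintype.sum_prod_type, ite_and, mul_smul_comm,
    smul_mul_assoc, smul_smul, sum_ite_rev₁, sum_ite_rev₂]

lemma M1QA_M2_apply (θ : Fin N → ℚ) (X Y : Matrix (Fin N) (Fin N) A) (a b : Fin N × Fin N) :
    (M1 N A X * QA N A θ * M2 N A Y) a b
      = (θ a.2.rev * θ b.1) • (X a.1 a.2.rev * Y b.1.rev b.2) := by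
  simp [Matrix.mul_apply, M1, M2, QA, Fintype.sum_prod_type, ite_and, mul_smul_comm,
    smul_mul_assoc, smul_smul, sum_ite_rev₁, sum_ite_rev₂]

section Cov

variable (θ : Fin N → ℚ) (θ₀ : ℚ)
  (hθ : ∀ i, θ i = 1 ∨ θ i = -1) (hθ₀ : θ₀ = 1 ∨ θ₀ = -1)
  (hτ : ∀ i, θ i * θ i.rev = θ₀)

include hθ hθ₀ hτ

lemma covA (X Y : Matrix (Fin N) (Fin N) A) :
    T1x N A θ (PA N A * (M1 N A X * M2 N A Y))
      = M1 N A (tmat N A θ X) * QA N A θ * M2 N A Y := by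
  have hrev : ∀ i : Fin N, θ i.rev = θ₀ * θ i := by
    intro i; have h := hτ i; rcases hθ i with h1 | h1 <;> rw [h1] at h ⊢ <;> linarith
  ext a b
  simp only [T1x, Matrix.of_apply, PA_mul_apply, M1M2_apply, M1QA_M2_apply, tmat,
    Fin.rev_rev, smul_mul_assoc, mul_smul_comm, smul_smul, hrev]
  rcases hθ₀ with h0 | h0 <;> rcases hθ a.1 with h1 | h1 <;> rcases hθ a.2 with h2 | h2 <;>
    rcases hθ b.1 with h3 | h3 <;> rcases hθ b.2 with h4 | h4 <;>
    simp only [h0, h1, h2, h3, h4] <;> norm_num [mul_comm]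

lemma covB (X Y : Matrix (Fin N) (Fin N) A) :
    T1x N A θ ((M1 N A X * M2 N A Y) * PA N A)
      = M2 N A Y * QA N A θ * M1 N A (tmat N A θ X) := by
  have hrev : ∀ i : Fin N, θ i.rev = θ₀ * θ i := by
    intro i; have h := hτ i; rcases hθ i with h1 | h1 <;> rw [h1] at h ⊢ <;> linarith
  ext a b
  simp only [T1x, T2x, Matrix.of_apply, PA_mul_apply, mul_PA_apply, M1M2_apply,
    M1QA_M2_apply, M2QA_M1_apply, tmat, Fin.rev_rev, smul_mul_assoc, mul_smul_comm,
    smul_smul, hrev]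
  rcases hθ₀ with h0 | h0 <;> rcases hθ a.1 with h1 | h1 <;> rcases hθ a.2 with h2 | h2 <;>
    rcases hθ b.1 with h3 | h3 <;> rcases hθ b.2 with h4 | h4 <;>
    simp only [h0, h1, h2, h3, h4] <;> norm_num [mul_comm]

lemma covC (X Y : Matrix (Fin N) (Fin N) A) :
    T1x N A θ (M2 N A Y * QA N A θ * M1 N A X)
      = M1 N A (tmat N A θ X) * M2 N A Y * PA N A := by
  have hrev : ∀ i : Fin N, θ i.rev = θ₀ * θ i := by
    intro i; have h := hτ i; rcases hθ i with h1 | h1 <;> rw [h1] at h ⊢ <;> linarith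
  ext a b
  simp only [T1x, T2x, Matrix.of_apply, PA_mul_apply, mul_PA_apply, M1M2_apply,
    M1QA_M2_apply, M2QA_M1_apply, tmat, Fin.rev_rev, smul_mul_assoc, mul_smul_comm,
    smul_smul, hrev]
  rcases hθ₀ with h0 | h0 <;> rcases hθ a.1 with h1 | h1 <;> rcases hθ a.2 with h2 | h2 <;>
    rcases hθ b.1 with h3 | h3 <;> rcases hθ b.2 with h4 | h4 <;>
    simp only [h0, h1, h2, h3, h4] <;> norm_num [mul_comm]

lemma covD (X Y : Matrix (Fin N) (Fin N) A) :
    T1x N A θ (M1 N A X * QA N A θ * M2 N A Y)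
      = PA N A * (M1 N A (tmat N A θ X) * M2 N A Y) := by
  have hrev : ∀ i : Fin N, θ i.rev = θ₀ * θ i := by
    intro i; have h := hτ i; rcases hθ i with h1 | h1 <;> rw [h1] at h ⊢ <;> linarith
  ext a b
  simp only [T1x, T2x, Matrix.of_apply, PA_mul_apply, mul_PA_apply, M1M2_apply,
    M1QA_M2_apply, M2QA_M1_apply, tmat, Fin.rev_rev, smul_mul_assoc, mul_smul_comm,
    smul_smul, hrev]
  rcases hθ₀ with h0 | h0 <;> rcases hθ a.1 with h1 | h1 <;> rcases hθ a.2 with h2 | h2 <;>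
    rcases hθ b.1 with h3 | h3 <;> rcases hθ b.2 with h4 | h4 <;>
    simp only [h0, h1, h2, h3, h4] <;> norm_num [mul_comm]

lemma covE (X Y : Matrix (Fin N) (Fin N) A) :
    T2x N A θ (PA N A * (M1 N A X * M2 N A Y))
      = M2 N A (tmat N A θ Y) * QA N A θ * M1 N A X := by
  have hrev : ∀ i : Fin N, θ i.rev = θ₀ * θ i := by
    intro i; have h := hτ i; rcases hθ i with h1 | h1 <;> rw [h1] at h ⊢ <;> linarith
  ext a b
  simp only [T1x, T2x, Matrix.of_apply, PA_mul_apply, mul_PA_apply, M1M2_apply,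
    M1QA_M2_apply, M2QA_M1_apply, tmat, Fin.rev_rev, smul_mul_assoc, mul_smul_comm,
    smul_smul, hrev]
  rcases hθ₀ with h0 | h0 <;> rcases hθ a.1 with h1 | h1 <;> rcases hθ a.2 with h2 | h2 <;>
    rcases hθ b.1 with h3 | h3 <;> rcases hθ b.2 with h4 | h4 <;>
    simp only [h0, h1, h2, h3, h4] <;> norm_num [mul_comm]

lemma covF (X Y : Matrix (Fin N) (Fin N) A) :
    T2x N A θ ((M1 N A X * M2 N A Y) * PA N A)
      = M1 N A X * QA N A θ * M2 N A (tmat N A θ Y) := by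
  have hrev : ∀ i : Fin N, θ i.rev = θ₀ * θ i := by
    intro i; have h := hτ i; rcases hθ i with h1 | h1 <;> rw [h1] at h ⊢ <;> linarith
  ext a b
  simp only [T1x, T2x, Matrix.of_apply, PA_mul_apply, mul_PA_apply, M1M2_apply,
    M1QA_M2_apply, M2QA_M1_apply, tmat, Fin.rev_rev, smul_mul_assoc, mul_smul_comm,
    smul_smul, hrev]
  rcases hθ₀ with h0 | h0 <;> rcases hθ a.1 with h1 | h1 <;> rcases hθ a.2 with h2 | h2 <;>
    rcases hθ b.1 with h3 | h3 <;> rcases hθ b.2 with h4 | h4 <;>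
    simp only [h0, h1, h2, h3, h4] <;> norm_num [mul_comm]

lemma covG (X Y : Matrix (Fin N) (Fin N) A) :
    T2x N A θ (M2 N A Y * QA N A θ * M1 N A X)
      = PA N A * (M1 N A X * M2 N A (tmat N A θ Y)) := by
  have hrev : ∀ i : Fin N, θ i.rev = θ₀ * θ i := by
    intro i; have h := hτ i; rcases hθ i with h1 | h1 <;> rw [h1] at h ⊢ <;> linarith
  ext a b
  simp only [T1x, T2x, Matrix.of_apply, PA_mul_apply, mul_PA_apply, M1M2_apply,
    M1QA_M2_apply, M2QA_M1_apply, tmat, Fin.rev_rev, smul_mul_assoc, mul_smul_comm,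
    smul_smul, hrev]
  rcases hθ₀ with h0 | h0 <;> rcases hθ a.1 with h1 | h1 <;> rcases hθ a.2 with h2 | h2 <;>
    rcases hθ b.1 with h3 | h3 <;> rcases hθ b.2 with h4 | h4 <;>
    simp only [h0, h1, h2, h3, h4] <;> norm_num [mul_comm]

lemma covH (X Y : Matrix (Fin N) (Fin N) A) :
    T2x N A θ (M1 N A X * QA N A θ * M2 N A Y)
      = M1 N A X * M2 N A (tmat N A θ Y) * PA N A := by
  have hrev : ∀ i : Fin N, θ i.rev = θ₀ * θ i := by
    intro i; have h := hτ i; rcases hθ i with h1 | h1 <;> rw [h1] at h ⊢ <;> linarith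
  ext a b
  simp only [T1x, T2x, Matrix.of_apply, PA_mul_apply, mul_PA_apply, M1M2_apply,
    M1QA_M2_apply, M2QA_M1_apply, tmat, Fin.rev_rev, smul_mul_assoc, mul_smul_comm,
    smul_smul, hrev]
  rcases hθ₀ with h0 | h0 <;> rcases hθ a.1 with h1 | h1 <;> rcases hθ a.2 with h2 | h2 <;>
    rcases hθ b.1 with h3 | h3 <;> rcases hθ b.2 with h4 | h4 <;>
    simp only [h0, h1, h2, h3, h4] <;> norm_num [mul_comm]

end Cov

section Lin

variable (θ : Fin N → ℚ)

lemma T1x_add (Z W : Matrix (Fin N × Fin N) (Fin N × Fin N) A) :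
    T1x N A θ (Z + W) = T1x N A θ Z + T1x N A θ W := by
  ext a b; simp [T1x, smul_add]

lemma T1x_sub (Z W : Matrix (Fin N × Fin N) (Fin N × Fin N) A) :
    T1x N A θ (Z - W) = T1x N A θ Z - T1x N A θ W := by
  ext a b; simp [T1x, smul_sub]

lemma T2x_add (Z W : Matrix (Fin N × Fin N) (Fin N × Fin N) A) :
    T2x N A θ (Z + W) = T2x N A θ Z + T2x N A θ W := by
  ext a b; simp [T2x, smul_add]

lemma T2x_sub (Z W : Matrix (Fin N × Fin N) (Fin N × Fin N) A) :
    T2x N A θ (Z - W) = T2x N A θ Z - T2x N A θ W := by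
  ext a b; simp [T2x, smul_sub]

lemma M1_add (X Y : Matrix (Fin N) (Fin N) A) :
    M1 N A (X + Y) = M1 N A X + M1 N A Y := by
  ext a b; simp only [M1, Matrix.of_apply, Matrix.add_apply]; split <;> simp

lemma M2_add (X Y : Matrix (Fin N) (Fin N) A) :
    M2 N A (X + Y) = M2 N A X + M2 N A Y := by
  ext a b; simp only [M2, Matrix.of_apply, Matrix.add_apply]; split <;> simp

lemma M1_smul (q : ℚ) (X : Matrix (Fin N) (Fin N) A) :
    M1 N A (q • X) = q • M1 N A X := by
  ext a b; simp only [M1, Matrix.of_apply, Matrix.smul_apply]; split <;> simp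

lemma M2_smul (q : ℚ) (X : Matrix (Fin N) (Fin N) A) :
    M2 N A (q • X) = q • M2 N A X := by
  ext a b; simp only [M2, Matrix.of_apply, Matrix.smul_apply]; split <;> simp

lemma Hmat_add_l (X X' Y : Matrix (Fin N) (Fin N) A) :
    Hmat N A θ (X + X') Y = Hmat N A θ X Y + Hmat N A θ X' Y := by
  unfold Hmat; rw [M1_add]; simp only [add_mul, mul_add]; abel

lemma Hmat_add_r (X Y Y' : Matrix (Fin N) (Fin N) A) :
    Hmat N A θ X (Y + Y') = Hmat N A θ X Y + Hmat N A θ X Y' := by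
  unfold Hmat; rw [M2_add]; simp only [add_mul, mul_add]; abel

lemma Hmat_smul_l (q : ℚ) (X Y : Matrix (Fin N) (Fin N) A) :
    Hmat N A θ (q • X) Y = q • Hmat N A θ X Y := by
  unfold Hmat; rw [M1_smul]
  simp only [smul_mul_assoc, mul_smul_comm, smul_sub, smul_add]

lemma Hmat_smul_r (q : ℚ) (X Y : Matrix (Fin N) (Fin N) A) :
    Hmat N A θ X (q • Y) = q • Hmat N A θ X Y := by
  unfold Hmat; rw [M2_smul]
  simp only [smul_mul_assoc, mul_smul_comm, smul_sub, smul_add]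

lemma Kmat_add_l (X X' Y : Matrix (Fin N) (Fin N) A) :
    Kmat N A θ (X + X') Y = Kmat N A θ X Y + Kmat N A θ X' Y := by
  unfold Kmat; rw [M1_add]; simp only [add_mul, mul_add]; abel

lemma Kmat_add_r (X Y Y' : Matrix (Fin N) (Fin N) A) :
    Kmat N A θ X (Y + Y') = Kmat N A θ X Y + Kmat N A θ X Y' := by
  unfold Kmat; rw [M2_add]; simp only [add_mul, mul_add]; abel

lemma Kmat_smul_l (q : ℚ) (X Y : Matrix (Fin N) (Fin N) A) :
    Kmat N A θ (q • X) Y = q • Kmat N A θ X Y := by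
  unfold Kmat; rw [M1_smul]
  simp only [smul_mul_assoc, mul_smul_comm, smul_sub, smul_add]

lemma Kmat_smul_r (q : ℚ) (X Y : Matrix (Fin N) (Fin N) A) :
    Kmat N A θ X (q • Y) = q • Kmat N A θ X Y := by
  unfold Kmat; rw [M2_smul]
  simp only [smul_mul_assoc, mul_smul_comm, smul_sub, smul_add]

end Lin

section CovHK

variable (θ : Fin N → ℚ) (θ₀ : ℚ)
  (hθ : ∀ i, θ i = 1 ∨ θ i = -1) (hθ₀ : θ₀ = 1 ∨ θ₀ = -1)
  (hτ : ∀ i, θ i * θ i.rev = θ₀)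

include hθ hθ₀ hτ

lemma T1_Hmat (X Y : Matrix (Fin N) (Fin N) A) :
    T1x N A θ (Hmat N A θ X Y) = -(Hmat N A θ (tmat N A θ X) Y) := by
  unfold Hmat
  rw [T1x_add, T1x_sub, T1x_sub, covA N A θ θ₀ hθ hθ₀ hτ, covB N A θ θ₀ hθ hθ₀ hτ,
    covC N A θ θ₀ hθ hθ₀ hτ, covD N A θ θ₀ hθ hθ₀ hτ]
  abel

lemma T1_Kmat (X Y : Matrix (Fin N) (Fin N) A) :
    T1x N A θ (Kmat N A θ X Y) = Kmat N A θ (tmat N A θ X) Y := by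
  unfold Kmat
  rw [T1x_sub, T1x_sub, T1x_sub, covA N A θ θ₀ hθ hθ₀ hτ, covB N A θ θ₀ hθ hθ₀ hτ,
    covC N A θ θ₀ hθ hθ₀ hτ, covD N A θ θ₀ hθ hθ₀ hτ]
  abel

lemma T2_Hmat (X Y : Matrix (Fin N) (Fin N) A) :
    T2x N A θ (Hmat N A θ X Y) = Hmat N A θ X (tmat N A θ Y) := by
  unfold Hmat
  rw [T2x_add, T2x_sub, T2x_sub, covE N A θ θ₀ hθ hθ₀ hτ, covF N A θ θ₀ hθ hθ₀ hτ,
    covG N A θ θ₀ hθ hθ₀ hτ, covH N A θ θ₀ hθ hθ₀ hτ]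
  abel

lemma T2_Kmat (X Y : Matrix (Fin N) (Fin N) A) :
    T2x N A θ (Kmat N A θ X Y) = -(Kmat N A θ X (tmat N A θ Y)) := by
  unfold Kmat
  rw [T2x_sub, T2x_sub, T2x_sub, covE N A θ θ₀ hθ hθ₀ hτ, covF N A θ θ₀ hθ hθ₀ hτ,
    covG N A θ θ₀ hθ hθ₀ hτ, covH N A θ θ₀ hθ hθ₀ hτ]
  abel

end CovHK

section PBlem

variable (θ : Fin N → ℚ) (pb : A → A → A)

lemma PB_add_l (h : ∀ a b c : A, pb (a + b) c = pb a c + pb b c)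
    (X X' Y : Matrix (Fin N) (Fin N) A) :
    PBmat N A pb (X + X') Y = PBmat N A pb X Y + PBmat N A pb X' Y := by
  ext a b; simp [PBmat, h]

lemma PB_add_r (h : ∀ a b c : A, pb a (b + c) = pb a b + pb a c)
    (X Y Y' : Matrix (Fin N) (Fin N) A) :
    PBmat N A pb X (Y + Y') = PBmat N A pb X Y + PBmat N A pb X Y' := by
  ext a b; simp [PBmat, h]

lemma PB_smul_l (h : ∀ (q : ℚ) (a b : A), pb (q • a) b = q • pb a b)
    (q : ℚ) (X Y : Matrix (Fin N) (Fin N) A) :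
    PBmat N A pb (q • X) Y = q • PBmat N A pb X Y := by
  ext a b; simp [PBmat, h]

lemma PB_smul_r (h : ∀ (q : ℚ) (a b : A), pb a (q • b) = q • pb a b)
    (q : ℚ) (X Y : Matrix (Fin N) (Fin N) A) :
    PBmat N A pb X (q • Y) = q • PBmat N A pb X Y := by
  ext a b; simp [PBmat, h]

lemma PB_tmat_l (h : ∀ (q : ℚ) (a b : A), pb (q • a) b = q • pb a b)
    (X Y : Matrix (Fin N) (Fin N) A) :
    PBmat N A pb (tmat N A θ X) Y = T1x N A θ (PBmat N A pb X Y) := by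
  ext a b; simp [PBmat, tmat, T1x, h]

lemma PB_tmat_r (h : ∀ (q : ℚ) (a b : A), pb a (q • b) = q • pb a b)
    (X Y : Matrix (Fin N) (Fin N) A) :
    PBmat N A pb X (tmat N A θ Y) = T2x N A θ (PBmat N A pb X Y) := by
  ext a b; simp [PBmat, tmat, T2x, h]

end PBlem

section Neg
variable (θ : Fin N → ℚ)
lemma T1x_neg (Z : Matrix (Fin N × Fin N) (Fin N × Fin N) A) :
    T1x N A θ (-Z) = -(T1x N A θ Z) := by
  ext a b; simp [T1x]
end Neg

/-- If the commuting generating series `S(u)` satisfies the reflection-type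
Poisson bracket relation, then `S'(u) = ½(S(u) + τ(S(u)))` satisfies the same
relation; moreover `S'(u) - S'(-u) = S(u) - S(-u)` whenever
`τ[S(u)] = S(u) + θ₀ (S(u)-S(-u))/(2u)` (all stated coefficientwise, with
`τ(S(u)) = S^t(-u)` having coefficients `(-1)^m (S_{(m)})^t`). -/
theorem stmt11 (pb : A → A → A)
    (hadd_l : ∀ a b c : A, pb (a + b) c = pb a c + pb b c)
    (hadd_r : ∀ a b c : A, pb a (b + c) = pb a b + pb a c)
    (hsmul_l : ∀ (q : ℚ) (a b : A), pb (q • a) b = q • pb a b)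
    (hsmul_r : ∀ (q : ℚ) (a b : A), pb a (q • b) = q • pb a b)
    (hanti : ∀ a b : A, pb a b = -pb b a)
    (hleib : ∀ a b c : A, pb a (b * c) = pb a b * c + b * pb a c)
    (θ : Fin N → ℚ) (θ₀ : ℚ)
    (hθ : ∀ i, θ i = 1 ∨ θ i = -1) (hθ₀ : θ₀ = 1 ∨ θ₀ = -1)
    (hτ : ∀ i, θ i * θ i.rev = θ₀)
    (S : ℕ → Matrix (Fin N) (Fin N) A) (hS0 : S 0 = 1)
    (hRef : RefRel N A θ pb S) :
    RefRel N A θ pb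
      (fun m => (1 / 2 : ℚ) • (S m + ((-1 : ℚ) ^ m) • tmat N A θ (S m))) ∧
    ((∀ m : ℕ, ((-1 : ℚ) ^ m) • tmat N A θ (S m)
        = S m + θ₀ • (if Even m ∧ m ≠ 0 then S (m - 1) else 0)) →
      ∀ m : ℕ,
        (fun m => (1 / 2 : ℚ) • (S m + ((-1 : ℚ) ^ m) • tmat N A θ (S m))) m
            - ((-1 : ℚ) ^ m) •
              (fun m => (1 / 2 : ℚ) • (S m + ((-1 : ℚ) ^ m) • tmat N A θ (S m))) m
          = S m - ((-1 : ℚ) ^ m) • S m) := by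
  have key : ∀ m n : ℕ,
      PBmat N A pb (S (m + 2)) (S n) - PBmat N A pb (S m) (S (n + 2))
        = Hmat N A θ (S (m + 1)) (S n) + Kmat N A θ (S m) (S (n + 1)) := by
    intro m n; rw [hRef m n]; unfold Hmat Kmat; abel
  constructor
  · intro m n
    dsimp only
    have grp : ∀ (U V W T : Matrix (Fin N) (Fin N) A),
        (PA N A * (M1 N A U * M2 N A V) - (M1 N A U * M2 N A V) * PA N A)
          + (PA N A * (M1 N A W * M2 N A T) - (M1 N A W * M2 N A T) * PA N A)
          + ((M2 N A V * QA N A θ * M1 N A U - M1 N A U * QA N A θ * M2 N A V)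
            - (M2 N A T * QA N A θ * M1 N A W - M1 N A W * QA N A θ * M2 N A T))
          = Hmat N A θ U V + Kmat N A θ W T := by
      intros; unfold Hmat Kmat; abel
    rw [grp]
    have pm2 : ((-1 : ℚ)) ^ (m + 2) = (-1 : ℚ) ^ m := by rw [pow_add]; norm_num
    have pn2 : ((-1 : ℚ)) ^ (n + 2) = (-1 : ℚ) ^ n := by rw [pow_add]; norm_num
    have pm1 : ((-1 : ℚ)) ^ (m + 1) = -((-1 : ℚ) ^ m) := by rw [pow_succ]; ring
    have pn1 : ((-1 : ℚ)) ^ (n + 1) = -((-1 : ℚ) ^ n) := by rw [pow_succ]; ring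
    rw [pm2, pn2, pm1, pn1]
    have h00 := key m n
    have h10 : PBmat N A pb (tmat N A θ (S (m + 2))) (S n)
        - PBmat N A pb (tmat N A θ (S m)) (S (n + 2))
        = -(Hmat N A θ (tmat N A θ (S (m + 1))) (S n))
          + Kmat N A θ (tmat N A θ (S m)) (S (n + 1)) := by
      have h := congrArg (T1x N A θ) h00
      rwa [T1x_sub, T1x_add, ← PB_tmat_l N A θ pb hsmul_l, ← PB_tmat_l N A θ pb hsmul_l,
        T1_Hmat N A θ θ₀ hθ hθ₀ hτ, T1_Kmat N A θ θ₀ hθ hθ₀ hτ] at h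
    have h01 : PBmat N A pb (S (m + 2)) (tmat N A θ (S n))
        - PBmat N A pb (S m) (tmat N A θ (S (n + 2)))
        = Hmat N A θ (S (m + 1)) (tmat N A θ (S n))
          + -(Kmat N A θ (S m) (tmat N A θ (S (n + 1)))) := by
      have h := congrArg (T2x N A θ) h00
      rwa [T2x_sub, T2x_add, ← PB_tmat_r N A θ pb hsmul_r, ← PB_tmat_r N A θ pb hsmul_r,
        T2_Hmat N A θ θ₀ hθ hθ₀ hτ, T2_Kmat N A θ θ₀ hθ hθ₀ hτ] at h
    have h11 : PBmat N A pb (tmat N A θ (S (m + 2))) (tmat N A θ (S n))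
        - PBmat N A pb (tmat N A θ (S m)) (tmat N A θ (S (n + 2)))
        = -(Hmat N A θ (tmat N A θ (S (m + 1))) (tmat N A θ (S n)))
          + -(Kmat N A θ (tmat N A θ (S m)) (tmat N A θ (S (n + 1)))) := by
      have h := congrArg (T1x N A θ) h01
      rwa [T1x_sub, T1x_add, T1x_neg, ← PB_tmat_l N A θ pb hsmul_l,
        ← PB_tmat_l N A θ pb hsmul_l,
        T1_Hmat N A θ θ₀ hθ hθ₀ hτ, T1_Kmat N A θ θ₀ hθ hθ₀ hτ] at h
    rw [sub_eq_iff_eq_add] at h00 h10 h01 h11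
    simp only [PB_smul_l N A pb hsmul_l, PB_smul_r N A pb hsmul_r,
      PB_add_l N A pb hadd_l, PB_add_r N A pb hadd_r,
      Hmat_add_l N A θ, Hmat_add_r N A θ, Hmat_smul_l N A θ, Hmat_smul_r N A θ,
      Kmat_add_l N A θ, Kmat_add_r N A θ, Kmat_smul_l N A θ, Kmat_smul_r N A θ]
    rw [h00, h10, h01, h11]
    module
  · intro h m
    dsimp only
    rw [h m]
    rcases Nat.even_or_odd m with he | ho
    · rw [Even.neg_one_pow he]
      simp
    · rw [Odd.neg_one_pow ho]
      have hne : ¬(Even m ∧ m ≠ 0) := fun hc => (Nat.not_even_iff_odd.mpr ho) hc.1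
      rw [if_neg hne]
      simp only [smul_zero, add_zero, neg_smul, one_smul, sub_neg_eq_add]
      module
end
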